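/- Let A ∈ 𝒫_π be a canonical plane matrix of type π with parameters λ_{j,i}, and for λ ∈ ℂ let μ(λ,i) be the multiplicity of λ in the multiset [λ_{i,1},...,λ_{i,l_i}] and α(λ,j) = μ(λ,1) + ... + μ(λ,j). Then for every j ∈ {1,...,t}, the matrix G_j is similar to the direct sum ⊕_λ J_{α(λ,j)}(λ), where λ ranges over the distinct complex numbers with α(λ,j) > 0 and J_k(λ) is the k×k Jordan block with eigenvalue λ; in particular G_j has exactly one Jordan block for each of its eigenvalues. -/

import Mathlib

/- Common setup: canonical plane matrices (P. Daugulis, "A parametrization of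
matrix conjugacy orbit sets as unions of affine planes"). -/

open Matrix Polynomial

noncomputable section

/-- `ℕ`-indexed entries of the generalized companion matrix `R_l(y₁,...,y_l)`:
subdiagonal entries `1`, last column given (via Vieta) by the coefficients of
`∏ (X - yᵢ)` (entry in row `k` of the last column is
`(−1)^{l+1−k}·e_{l+1−k}(y)`), all other entries `0`. -/
def genCompE (l : ℕ) (y : Fin l → ℂ) (i j : ℕ) : ℂ :=
  if i < l ∧ j < l then
    (if i = j + 1 then 1
     else if j = l - 1 then -((∏ k, (X - C (y k))).coeff i)
     else 0)
  else 0

/-- The generalized companion matrix `R_l(y₁,...,y_l)`, i.e. the companion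
matrix of `∏ (X - yᵢ)`. -/
def genComp (l : ℕ) (y : Fin l → ℂ) : Matrix (Fin l) (Fin l) ℂ :=
  Matrix.of fun i j => genCompE l y i j

/-- A partition of `n`, recorded by its stacks: `t` stacks, with strictly
decreasing positive distinct values `m 0 > m 1 > ... > m (t-1)` and positive
lengths `l j`, so that the partition consists of `l j` copies of `m j` and
`n = ∑ j, l j * m j`. -/
structure StackPartition (n : ℕ) where
  t : ℕ
  m : Fin t → ℕ
  l : Fin t → ℕ
  m_pos : ∀ j, 0 < m j
  l_pos : ∀ j, 0 < l j
  m_strictAnti : ∀ i j : Fin t, i < j → m j < m i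
  sum_eq : (∑ j, l j * m j) = n

namespace StackPartition

variable {n : ℕ} (P : StackPartition n)

/-- `m j` extended by `0` beyond the number of stacks (`0`-indexed), so
`mE 0 = m_1` and `mE t = m_{t+1} = 0` in the paper's notation. -/
def mE (j : ℕ) : ℕ := if h : j < P.t then P.m ⟨j, h⟩ else 0

/-- Row/column offset of the `j`-th diagonal block (`0`-indexed):
`S j = ∑_{i<j} l i * m i`. -/
def S (j : ℕ) : ℕ := ∑ i : Fin P.t, if (i : ℕ) < j then P.l i * P.m i else 0

/-- `sE j = ∑_{i<j} l i`; the paper's `s_j` (for `1`-indexed `j`) is `sE j`. -/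
def sE (j : ℕ) : ℕ := ∑ i : Fin P.t, if (i : ℕ) < j then P.l i else 0

/-- The multiset of addends of the partition. -/
def parts : Multiset ℕ := ∑ j : Fin P.t, Multiset.replicate (P.l j) (P.m j)

/-- Offsets for the direct sum `⊕_j (m_j - m_{j+1}) G_j`. -/
def T (k : ℕ) : ℕ :=
  ∑ i : Fin P.t, if (i : ℕ) < k then (P.m i - P.mE ((i : ℕ) + 1)) * P.sE ((i : ℕ) + 1) else 0

end StackPartition

/-- Parameters `λ_{j,1},...,λ_{j,l_j}` for each stack `j`. -/
def Params {n : ℕ} (P : StackPartition n) := (j : Fin P.t) → Fin (P.l j) → ℂ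

/-- `ℕ`-indexed entry of the canonical plane matrix of type `P` with
parameters `lam`: the `j`-th diagonal block (of size `l j * m j`, occupying
rows and columns `[S j, S (j+1))`) is `R_{l j}(lam j) ⊗ E_{m j}` (row index
`a` of the block encodes the pair `(a / m j, a % m j)`), the block directly
below it occupies the first `m (j+1)` rows of block `j+1` and the last `m j`
columns of block `j` and equals `[O | E_{m (j+1)}]`, and all other entries
vanish. -/
def cpmEntry {n : ℕ} (P : StackPartition n) (lam : Params P) (r c : ℕ) : ℂ :=
  (∑ j : Fin P.t,
    if P.S j ≤ r ∧ r < P.S ((j : ℕ) + 1) ∧ P.S j ≤ c ∧ c < P.S ((j : ℕ) + 1)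
        ∧ (r - P.S j) % P.m j = (c - P.S j) % P.m j then
      genCompE (P.l j) (lam j) ((r - P.S j) / P.m j) ((c - P.S j) / P.m j)
    else 0)
  +
  (∑ j : Fin P.t,
    if P.S ((j : ℕ) + 1) ≤ r ∧ r < P.S ((j : ℕ) + 1) + P.mE ((j : ℕ) + 1)
        ∧ P.S ((j : ℕ) + 1) - P.m j ≤ c ∧ c < P.S ((j : ℕ) + 1)
        ∧ c - (P.S ((j : ℕ) + 1) - P.m j)
            = (P.m j - P.mE ((j : ℕ) + 1)) + (r - P.S ((j : ℕ) + 1)) then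
      (1 : ℂ)
    else 0)

/-- The canonical plane matrix of type `P` with parameters `lam`. -/
def cpm {n : ℕ} (P : StackPartition n) (lam : Params P) : Matrix (Fin n) (Fin n) ℂ :=
  Matrix.of fun r c => cpmEntry P lam r c

/-- The set `𝒫_π` of canonical plane matrices of type `P`. -/
def planeSet {n : ℕ} (P : StackPartition n) : Set (Matrix (Fin n) (Fin n) ℂ) :=
  { A | ∃ lam : Params P, A = cpm P lam }

/-- Similarity (conjugacy) of square complex matrices. -/
def MatrixSimilar {n : ℕ} (A B : Matrix (Fin n) (Fin n) ℂ) : Prop :=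
  ∃ Q : Matrix (Fin n) (Fin n) ℂ, IsUnit Q.det ∧ A * Q = Q * B

/-- The `A`-cyclic subspace `ℂ[A]·v`, spanned by `v, Av, A²v, ...`. -/
def cyclicSpan {n : ℕ} (A : Matrix (Fin n) (Fin n) ℂ) (v : Fin n → ℂ) :
    Submodule ℂ (Fin n → ℂ) :=
  Submodule.span ℂ (Set.range fun k : ℕ => (A ^ k) *ᵥ v)

/-- `ℕ`-indexed entry of the matrix
`G_j = ⊕_{i≤j} C(a_{i,0},...,a_{i,l_i−1}) + Σ_{i<j} E_{s_i+1,s_i}`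
(`0`-indexed `j`; the `i`-th diagonal block is the companion matrix of
`∏_k (X - λ_{i,k})`, and the matrix units sit just below the lower-left
corners of the diagonal blocks). -/
def GEntry {n : ℕ} (P : StackPartition n) (lam : Params P) (j r c : ℕ) : ℂ :=
  (∑ i : Fin P.t,
    if (i : ℕ) ≤ j ∧ P.sE i ≤ r ∧ r < P.sE ((i : ℕ) + 1)
        ∧ P.sE i ≤ c ∧ c < P.sE ((i : ℕ) + 1) then
      genCompE (P.l i) (lam i) (r - P.sE i) (c - P.sE i)
    else 0)
  +
  (∑ i : Fin P.t,
    if 1 ≤ (i : ℕ) ∧ (i : ℕ) ≤ j ∧ r = P.sE i ∧ c + 1 = P.sE i then (1 : ℂ) else 0)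

/-- The `s_j × s_j` matrix `G_j` (`0`-indexed `j`, of size `sE (j+1)`). -/
def Gm {n : ℕ} (P : StackPartition n) (lam : Params P) (j : Fin P.t) :
    Matrix (Fin (P.sE ((j : ℕ) + 1))) (Fin (P.sE ((j : ℕ) + 1))) ℂ :=
  Matrix.of fun r c => GEntry P lam j r c

/-- The multiset `[λ_{j,1},...,λ_{j,l_j}]` of stack `j`. -/
def stackMultiset {n : ℕ} (P : StackPartition n) (lam : Params P) (j : Fin P.t) :
    Multiset ℂ :=
  Multiset.map (lam j) Finset.univ.val

/-- `μ(z, j)`: multiplicity of `z` in the multiset `[λ_{j,1},...,λ_{j,l_j}]`. -/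
def mu {n : ℕ} (P : StackPartition n) (lam : Params P) (z : ℂ) (j : Fin P.t) : ℕ :=
  (stackMultiset P lam j).count z

/-- The multiset of all parameters of stacks `0,...,j` (`0`-indexed), so
`α(z, j) = (lamUpTo P lam j).count z`. -/
def lamUpTo {n : ℕ} (P : StackPartition n) (lam : Params P) (j : ℕ) : Multiset ℂ :=
  ∑ i : Fin P.t, if (i : ℕ) ≤ j then stackMultiset P lam i else 0

/-- Index type for the direct sum of one Jordan block per distinct element of a
multiset `s`, the block for `z` having size `s.count z`. -/
abbrev JordanIdx (s : Multiset ℂ) : Type := Σ z : s.toFinset, Fin (s.count z.val)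

/-- The direct sum `⊕_z J_{s.count z}(z)` over the distinct elements `z` of the
multiset `s` (lower Jordan blocks: eigenvalue on the diagonal, ones on the
subdiagonal). -/
def jordanOfMultiset (s : Multiset ℂ) : Matrix (JordanIdx s) (JordanIdx s) ℂ :=
  Matrix.of fun x y =>
    if x.1 = y.1 then
      (if (x.2 : ℕ) = (y.2 : ℕ) then x.1.val
       else if (x.2 : ℕ) = (y.2 : ℕ) + 1 then 1 else 0)
    else 0

/-- `0`-indexed Weyr characteristic: `weyr B z i = ω_{i+1}` where
`ω_k = dim ker (B - zI)^k − dim ker (B - zI)^{k-1}`. -/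
def weyr {n : ℕ} (B : Matrix (Fin n) (Fin n) ℂ) (z : ℂ) (i : ℕ) : ℕ :=
  Module.finrank ℂ (LinearMap.ker ((B - z • 1).mulVecLin ^ (i + 1)))
    - Module.finrank ℂ (LinearMap.ker ((B - z • 1).mulVecLin ^ i))

/-- `ℕ`-indexed entry of the block diagonal matrix `⊕_j (m_j - m_{j+1}) G_j`
(for each `j`, exactly `m j - m (j+1)` consecutive copies of `G_j`). -/
def dsEntry {n : ℕ} (P : StackPartition n) (lam : Params P) (r c : ℕ) : ℂ :=
  ∑ j : Fin P.t,
    if P.T j ≤ r ∧ r < P.T ((j : ℕ) + 1) ∧ P.T j ≤ c ∧ c < P.T ((j : ℕ) + 1)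
        ∧ (r - P.T j) / P.sE ((j : ℕ) + 1) = (c - P.T j) / P.sE ((j : ℕ) + 1) then
      GEntry P lam j ((r - P.T j) % P.sE ((j : ℕ) + 1)) ((c - P.T j) % P.sE ((j : ℕ) + 1))
    else 0

/-- Index type for `⊕_{j=1}^{t} (m_j - m_{j+1}) (⊕_z J_{α(z,j)}(z))`. -/
abbrev FullJordanIdx {n : ℕ} (P : StackPartition n) (lam : Params P) : Type :=
  Σ j : Fin P.t, Fin (P.m j - P.mE ((j : ℕ) + 1)) × JordanIdx (lamUpTo P lam (j : ℕ))

/-- The matrix `⊕_{j=1}^{t} (m_j - m_{j+1}) (⊕_z J_{α(z,j)}(z))`: for each `j`,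
`m j - m (j+1)` copies of the direct sum, over the distinct `z` with
`α(z,j) = μ(z,1) + ... + μ(z,j) > 0`, of the Jordan blocks `J_{α(z,j)}(z)`. -/
def fullJordan {n : ℕ} (P : StackPartition n) (lam : Params P) :
    Matrix (FullJordanIdx P lam) (FullJordanIdx P lam) ℂ :=
  Matrix.of fun x y =>
    if h : x.1 = y.1 then
      (fun y2 : Fin (P.m x.1 - P.mE ((x.1 : ℕ) + 1)) × JordanIdx (lamUpTo P lam (x.1 : ℕ)) =>
        if x.2.1 = y2.1 then jordanOfMultiset (lamUpTo P lam (x.1 : ℕ)) x.2.2 y2.2 else 0)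
      (cast (congrArg (fun j : Fin P.t =>
        Fin (P.m j - P.mE ((j : ℕ) + 1)) × JordanIdx (lamUpTo P lam (j : ℕ))) h.symm) y.2)
    else 0

end

/- Both `G_j` and the Jordan matrix `⊕_z J_{α(z,j)}(z)` are cyclic with the same annihilating
polynomial `p = ∏_z (X - z)^{α(z,j)}` of degree `s_j`, so both are similar to the companion
matrix of `p`: if `p(A) v = 0` and `v, Av, …, A^{N-1} v` is a basis, the matrix `K` with these
columns satisfies `A K = K C(p)`.

For `G_j` take `v = e_1`. Since `G_j` is lower Hessenberg with ones on the subdiagonal, `K` is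
unitriangular. Each diagonal block is a companion matrix whose last column spills into the first
basis vector of the next block, so the `i`-th stack polynomial maps `e_{s_{i-1}+1}` to
`e_{s_i+1}`, and the product of the first `j` of them kills `e_1`.

For the Jordan matrix take `v` with a one in the first coordinate of every block: the entries of
`r(J) v` are the Taylor coefficients of `r` at the eigenvalues, so `r(J) v = 0` exactly when
`p ∣ r`, which gives both `p(J) v = 0` and the independence of the Krylov vectors. -/

@[to_additive]
lemma Fin.prod_ite_lt_succ {M : Type*} [CommMonoid M] {t a : ℕ} (ha : a < t) (f : Fin t → M) :
    ∏ i : Fin t, (if (i : ℕ) < a + 1 then f i else 1)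
      = (∏ i : Fin t, if (i : ℕ) < a then f i else 1) * f ⟨a, ha⟩ := by
  have hsplit : ∀ i : Fin t, (if (i : ℕ) < a + 1 then f i else 1)
      = (if (i : ℕ) < a then f i else 1) * (if i = ⟨a, ha⟩ then f i else 1) := by
    intro i
    simp only [Fin.ext_iff]
    split_ifs <;> first | (exfalso; omega) | simp
  rw [Finset.prod_congr rfl fun i _ => hsplit i, Finset.prod_mul_distrib, Finset.prod_ite_eq']
  simp

lemma Polynomial.le_rootMultiplicity_iff_taylor_coeff {R : Type*} [CommRing R] {r : R[X]}
    (hr : r ≠ 0) (z : R) (n : ℕ) :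
    n ≤ r.rootMultiplicity z ↔ ∀ d < n, (taylor z r).coeff d = 0 := by
  rw [rootMultiplicity_eq_rootMultiplicity,
    le_rootMultiplicity_iff (comp_X_add_C_ne_zero_iff.mpr hr), C_0, sub_zero, X_pow_dvd_iff,
    taylor_apply]

namespace Matrix

section Krylov

variable {R : Type*} [CommRing R] {ι : Type*} [Fintype ι] [DecidableEq ι]

def krylov (A : Matrix ι ι R) (v : ι → R) (N : ℕ) : Matrix ι (Fin N) R :=
  of fun r k => (A ^ (k : ℕ) *ᵥ v) r

def companion (p : R[X]) (N : ℕ) : Matrix (Fin N) (Fin N) R :=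
  of fun r c => if (r : ℕ) = c + 1 then 1 else if (c : ℕ) + 1 = N then -p.coeff r else 0

lemma aeval_mulVec_eq_sum (A : Matrix ι ι R) (p : R[X]) (v : ι → R) :
    aeval A p *ᵥ v = ∑ i ∈ Finset.range (p.natDegree + 1), p.coeff i • (A ^ i *ᵥ v) := by
  simp only [aeval_eq_sum_range, sum_mulVec, smul_mulVec]

lemma pow_natDegree_mulVec_of_aeval_mulVec_eq_zero {A : Matrix ι ι R} {v : ι → R} {p : R[X]}
    (hp : p.Monic) (hpv : aeval A p *ᵥ v = 0) :
    A ^ p.natDegree *ᵥ v = -∑ i ∈ Finset.range p.natDegree, p.coeff i • (A ^ i *ᵥ v) := by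
  rw [aeval_mulVec_eq_sum, Finset.sum_range_succ, hp.coeff_natDegree, one_smul] at hpv
  exact eq_neg_of_add_eq_zero_right hpv

lemma mul_krylov_eq_krylov_mul_companion {A : Matrix ι ι R} {v : ι → R} {p : R[X]}
    (hp : p.Monic) (hpv : aeval A p *ᵥ v = 0) :
    A * krylov A v p.natDegree = krylov A v p.natDegree * companion p p.natDegree := by
  ext r k
  have hleft : (A * krylov A v p.natDegree) r k = (A ^ ((k : ℕ) + 1) *ᵥ v) r := by
    rw [pow_succ', ← mulVec_mulVec]
    simp [mul_apply, krylov, mulVec, dotProduct]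
  rw [hleft]
  simp only [mul_apply, krylov, companion, of_apply]
  by_cases hk : (k : ℕ) + 1 = p.natDegree
  · rw [hk, pow_natDegree_mulVec_of_aeval_mulVec_eq_zero hp hpv,
      ← Fin.sum_univ_eq_sum_range (fun i => p.coeff i • (A ^ i *ᵥ v))]
    simp only [Pi.neg_apply, Finset.sum_apply, Pi.smul_apply, smul_eq_mul, if_true,
      ← Finset.sum_neg_distrib]
    refine Finset.sum_congr rfl fun m _ => ?_
    rw [if_neg (by omega)]
    ring
  · rw [Finset.sum_eq_single ⟨(k : ℕ) + 1, by omega⟩]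
    · simp
    · intro m _ hm
      rw [if_neg (fun h => hm (Fin.ext h)), if_neg hk, mul_zero]
    · simp

lemma krylov_mulVec (A : Matrix ι ι R) (v : ι → R) (N : ℕ) (c : Fin N → R) :
    krylov A v N *ᵥ c = aeval A (∑ k : Fin N, C (c k) * X ^ (k : ℕ)) *ᵥ v := by
  have hterm : ∀ k : Fin N,
      aeval A (C (c k) * X ^ (k : ℕ)) *ᵥ v = c k • (A ^ (k : ℕ) *ᵥ v) := by
    intro k
    rw [_root_.map_mul, aeval_C, map_pow, aeval_X, ← Algebra.smul_def, smul_mulVec]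
  rw [map_sum, sum_mulVec, Finset.sum_congr rfl fun k _ => hterm k]
  ext r
  simp only [Finset.sum_apply, Pi.smul_apply, smul_eq_mul, mulVec, dotProduct, krylov, of_apply]
  exact Finset.sum_congr rfl fun k _ => mul_comm _ _

lemma aeval_mulVec_eq_of_companion_chain {A : Matrix ι ι R} {q : R[X]} (hq : q.Monic)
    (hdeg : 0 < q.natDegree) {u : ℕ → ι → R} {w : ι → R}
    (hshift : ∀ k, k + 1 < q.natDegree → A *ᵥ u k = u (k + 1))
    (hlast : A *ᵥ u (q.natDegree - 1)
      = w - ∑ k ∈ Finset.range q.natDegree, q.coeff k • u k) :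
    aeval A q *ᵥ u 0 = w := by
  have hpow : ∀ k < q.natDegree, A ^ k *ᵥ u 0 = u k := by
    intro k hk
    induction k with
    | zero => simp
    | succ k ih => rw [pow_succ', ← mulVec_mulVec, ih (by omega), hshift k hk]
  have htop : A ^ q.natDegree *ᵥ u 0 = A *ᵥ u (q.natDegree - 1) := by
    rw [← hpow (q.natDegree - 1) (by omega), mulVec_mulVec, ← pow_succ',
      Nat.sub_add_cancel hdeg]
  rw [aeval_mulVec_eq_sum, Finset.sum_range_succ, hq.coeff_natDegree, one_smul, htop, hlast,
    Finset.sum_congr rfl fun k hk => by rw [hpow k (Finset.mem_range.mp hk)]]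
  abel

lemma aeval_submatrix_mulVec {κ : Type*} [Fintype κ] [DecidableEq κ] (A : Matrix ι ι R)
    (e : ι ≃ κ) (r : R[X]) (v : ι → R) :
    aeval (A.submatrix e.symm e.symm) r *ᵥ (v ∘ e.symm) = (aeval A r *ᵥ v) ∘ e.symm := by
  have hA : A.submatrix e.symm e.symm = reindexAlgEquiv R R e A := by
    rw [coe_reindexAlgEquiv, reindex_apply]
  rw [hA, aeval_algHom_apply, coe_reindexAlgEquiv, reindex_apply, submatrix_mulVec_equiv]
  simp [Function.comp_def]

/-- The `k`-th standard basis vector, taken to be `0` when `N ≤ k`, so that the last step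
`p(G_j) e_1 = e_{s_j+1}` reads `p(G_j) e_1 = 0`. -/
def unitVec (N k : ℕ) : Fin N → R := fun r => if (r : ℕ) = k then 1 else 0

lemma unitVec_of_le {N k : ℕ} (h : N ≤ k) : (unitVec N k : Fin N → R) = 0 := by
  ext r
  simp [unitVec, show (r : ℕ) ≠ k by omega]

lemma mulVec_unitVec_apply {N k : ℕ} (M : Matrix (Fin N) (Fin N) R) (hk : k < N) (r : Fin N) :
    (M *ᵥ unitVec N k) r = M r ⟨k, hk⟩ := by
  simp only [mulVec, dotProduct, unitVec, mul_ite, mul_one, mul_zero]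
  rw [Finset.sum_eq_single ⟨k, hk⟩ (fun c _ hc => if_neg fun h => hc (Fin.ext h)) (by simp)]
  simp

lemma pow_mulVec_unitVec_zero_of_hessenberg {N : ℕ} {A : Matrix (Fin N) (Fin N) R}
    (hA0 : ∀ r c : Fin N, (c : ℕ) + 1 < r → A r c = 0)
    (hA1 : ∀ r c : Fin N, (r : ℕ) = c + 1 → A r c = 1) (k : ℕ) (r : Fin N) (hkr : k ≤ r) :
    (A ^ k *ᵥ unitVec N 0) r = unitVec N k r := by
  induction k generalizing r with
  | zero => simp
  | succ k ih =>
    rw [pow_succ', ← mulVec_mulVec, mulVec, dotProduct, Finset.sum_eq_single ⟨k, by omega⟩]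
    · rw [ih _ le_rfl]
      rcases (show (r : ℕ) = k + 1 ∨ k + 1 < r by omega) with hr | hr
      · simp [unitVec, hA1 r ⟨k, by omega⟩ hr, hr]
      · simp [unitVec, hA0 r ⟨k, by omega⟩ hr, hr.ne']
    · intro c _ hc
      have hc' : (c : ℕ) ≠ k := fun h => hc (Fin.ext h)
      rcases (show (c : ℕ) < k ∨ k < c by omega) with hck | hck
      · rw [hA0 _ _ (by omega), zero_mul]
      · rw [ih _ hck.le, unitVec, if_neg hck.ne', mul_zero]
    · simp

lemma det_krylov_unitVec_zero_of_hessenberg {N : ℕ} {A : Matrix (Fin N) (Fin N) R}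
    (hA0 : ∀ r c : Fin N, (c : ℕ) + 1 < r → A r c = 0)
    (hA1 : ∀ r c : Fin N, (r : ℕ) = c + 1 → A r c = 1) :
    (krylov A (unitVec N 0) N).det = 1 := by
  rw [det_of_isUpperTriangular]
  · simp [krylov, pow_mulVec_unitVec_zero_of_hessenberg hA0 hA1, unitVec]
  · intro r k hkr
    simp [krylov, pow_mulVec_unitVec_zero_of_hessenberg hA0 hA1 k r hkr.le, unitVec,
      show (r : ℕ) ≠ k from (Fin.lt_def.mp hkr).ne']

end Krylov

lemma isUnit_det_krylov_of_degree_lt {K : Type*} [Field K] {N : ℕ}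
    (A : Matrix (Fin N) (Fin N) K) (v : Fin N → K)
    (h : ∀ r : K[X], r.degree < N → aeval A r *ᵥ v = 0 → r = 0) :
    IsUnit (krylov A v N).det := by
  rw [← isUnit_iff_isUnit_det, ← mulVec_injective_iff_isUnit]
  intro c₁ c₂ hc
  have hr := h _ (degree_sum_fin_lt (c₁ - c₂))
    (by rw [← krylov_mulVec, mulVec_sub, hc, sub_self])
  ext k
  have hk := congrArg (coeff · k) hr
  simpa only [finsetSum_coeff, coeff_C_mul_X_pow, Fin.val_inj, Finset.sum_ite_eq,
    Finset.mem_univ, if_true, Pi.sub_apply, coeff_zero, sub_eq_zero] using hk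

end Matrix

namespace MatrixSimilar

variable {N : ℕ} {A B C : Matrix (Fin N) (Fin N) ℂ}

lemma symm (h : MatrixSimilar A B) : MatrixSimilar B A := by
  obtain ⟨Q, hQ, hAB⟩ := h
  refine ⟨Q⁻¹, isUnit_nonsing_inv_det _ hQ, ?_⟩
  rw [← nonsing_inv_mul_cancel_left Q (B * Q⁻¹) hQ, ← Matrix.mul_assoc Q, ← hAB,
    Matrix.mul_assoc, mul_nonsing_inv _ hQ, Matrix.mul_one]

lemma trans (hAB : MatrixSimilar A B) (hBC : MatrixSimilar B C) : MatrixSimilar A C := by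
  obtain ⟨Q, hQ, hAB⟩ := hAB
  obtain ⟨R, hR, hBC⟩ := hBC
  refine ⟨Q * R, by rw [det_mul]; exact hQ.mul hR, ?_⟩
  rw [← Matrix.mul_assoc, hAB, Matrix.mul_assoc, hBC, Matrix.mul_assoc]

end MatrixSimilar

lemma matrixSimilar_companion {N : ℕ} {A : Matrix (Fin N) (Fin N) ℂ} {v : Fin N → ℂ}
    {p : ℂ[X]}    (hp : p.Monic) (hN : p.natDegree = N) (hpv : aeval A p *ᵥ v = 0)
    (hK : IsUnit (krylov A v N).det) : MatrixSimilar A (companion p N) := by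
  subst hN
  exact ⟨_, hK, mul_krylov_eq_krylov_mul_companion hp hpv⟩

section Jordan

variable (s : Multiset ℂ)

noncomputable def jordanVec (f : ℂ[X]) : JordanIdx s → ℂ :=
  fun x => (taylor x.1.1 f).coeff x.2

lemma jordanVec_add (f g : ℂ[X]) : jordanVec s (f + g) = jordanVec s f + jordanVec s g := by
  ext x
  simp [jordanVec]

lemma jordanOfMultiset_mulVec_jordanVec (f : ℂ[X]) :
    jordanOfMultiset s *ᵥ jordanVec s f = jordanVec s (X * f) := by
  ext ⟨z, m⟩
  rw [mulVec, dotProduct, Fintype.sum_sigma, Finset.sum_eq_single z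
    (fun z' _ hz' => Finset.sum_eq_zero fun m' _ => by simp [jordanOfMultiset, Ne.symm hz'])
    (by simp)]
  have hterm : ∀ m' : Fin (s.count z.1),
      jordanOfMultiset s ⟨z, m⟩ ⟨z, m'⟩ * jordanVec s f ⟨z, m'⟩
        = (if (m' : ℕ) = m then z * (taylor z.1 f).coeff m' else 0)
          + (if (m' : ℕ) + 1 = m then (taylor z.1 f).coeff m' else 0) := by
    intro m'
    simp only [jordanOfMultiset, jordanVec, of_apply, if_true]
    split_ifs <;> first | (exfalso; omega) | ring
  rw [Finset.sum_congr rfl fun m' _ => hterm m', Finset.sum_add_distrib,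
    Fin.sum_univ_eq_sum_range (fun i => if i = (m : ℕ) then z * (taylor z.1 f).coeff i else 0),
    Fin.sum_univ_eq_sum_range (fun i => if i + 1 = (m : ℕ) then (taylor z.1 f).coeff i else 0),
    Finset.sum_ite_eq' _ _ _]
  simp only [jordanVec, taylor_mul, taylor_X, add_mul, coeff_add, coeff_C_mul, Finset.mem_range,
    m.isLt, if_true]
  obtain ⟨_ | m, hm⟩ := m
  · simp
  · simp [coeff_X_mul, Finset.sum_ite_eq', show m < s.count z.1 by omega]
    ring

lemma aeval_jordanOfMultiset_mulVec_jordanVec_one (r : ℂ[X]) :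
    aeval (jordanOfMultiset s) r *ᵥ jordanVec s 1 = jordanVec s r := by
  induction r using Polynomial.induction_on with
  | C a =>
    ext x
    simp [jordanVec, Algebra.algebraMap_eq_smul_one, smul_mulVec, coeff_one, coeff_C]
  | add p q hp hq => rw [map_add, add_mulVec, hp, hq, jordanVec_add]
  | monomial k a ih =>
    rw [show C a * X ^ (k + 1) = X * (C a * X ^ k) by ring, _root_.map_mul, aeval_X,
      ← mulVec_mulVec, ih, jordanOfMultiset_mulVec_jordanVec]

lemma jordanVec_eq_zero_iff (r : ℂ[X]) :
    jordanVec s r = 0 ↔ (s.map fun a => X - C a).prod ∣ r := by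
  rcases eq_or_ne r 0 with rfl | hr
  · simp only [dvd_zero, iff_true]
    ext x
    simp [jordanVec]
  rw [Multiset.prod_X_sub_C_dvd_iff_le_roots hr, Multiset.le_iff_count]
  simp_rw [count_roots, le_rootMultiplicity_iff_taylor_coeff hr]
  constructor
  · intro h a d hd
    have ha : a ∈ s.toFinset := Multiset.mem_toFinset.mpr (Multiset.count_pos.mp (by omega))
    exact congrFun h ⟨⟨a, ha⟩, ⟨d, hd⟩⟩
  · intro h
    ext ⟨⟨a, _⟩, d⟩
    exact h a d d.isLt

lemma card_jordanIdx : Fintype.card (JordanIdx s) = Multiset.card s := by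
  rw [Fintype.card_sigma]
  simp only [Fintype.card_fin]
  rw [Finset.sum_coe_sort _ (fun z => s.count z), Multiset.toFinset_sum_count_eq]

lemma matrixSimilar_jordanOfMultiset_companion {N : ℕ} (e : JordanIdx s ≃ Fin N) :
    MatrixSimilar ((jordanOfMultiset s).submatrix e.symm e.symm)
      (companion (s.map fun a => X - C a).prod N) := by
  have hN : (s.map fun a => X - C a).prod.natDegree = N := by
    rw [natDegree_multiset_prod_X_sub_C_eq_card, ← card_jordanIdx, Fintype.card_congr e,
      Fintype.card_fin]
  have hv : ∀ r : ℂ[X], aeval ((jordanOfMultiset s).submatrix e.symm e.symm) r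
      *ᵥ (jordanVec s 1 ∘ e.symm) = jordanVec s r ∘ e.symm := fun r => by
    rw [aeval_submatrix_mulVec, aeval_jordanOfMultiset_mulVec_jordanVec_one]
  refine matrixSimilar_companion (v := jordanVec s 1 ∘ e.symm) (monic_multisetProd_X_sub_C s) hN
    ?_ ?_
  · rw [hv, (jordanVec_eq_zero_iff s _).mpr dvd_rfl]
    rfl
  · refine isUnit_det_krylov_of_degree_lt _ _ fun r hr h0 => ?_
    rw [hv] at h0
    have hr0 : jordanVec s r = 0 := by
      ext x
      simpa using congrFun h0 (e x)
    refine eq_zero_of_dvd_of_degree_lt ((jordanVec_eq_zero_iff s r).mp hr0) ?_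
    rwa [degree_eq_natDegree (monic_multisetProd_X_sub_C s).ne_zero, hN]

end Jordan

namespace StackPartition

variable {n : ℕ} (P : StackPartition n)

lemma sE_zero : P.sE 0 = 0 := by
  simp [sE]

lemma sE_succ {a : ℕ} (ha : a < P.t) : P.sE (a + 1) = P.sE a + P.l ⟨a, ha⟩ :=
  Fin.sum_ite_lt_succ ha P.l

lemma sE_mono : Monotone P.sE := fun _ _ hab =>
  Finset.sum_le_sum fun _ _ => by split_ifs <;> omega

lemma sE_lt_sE {a b : ℕ} (hab : a < b) (hb : b ≤ P.t) : P.sE a < P.sE b :=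
  calc P.sE a < P.sE (a + 1) := by
        rw [P.sE_succ (by omega)]
        exact Nat.lt_add_of_pos_right (P.l_pos _)
    _ ≤ P.sE b := P.sE_mono hab

lemma eq_of_sE_le_of_lt_sE_succ {a b c : ℕ} (ha : P.sE a ≤ c) (ha' : c < P.sE (a + 1))
    (hb : P.sE b ≤ c) (hb' : c < P.sE (b + 1)) : a = b := by
  have := P.sE_mono.reflect_lt (ha.trans_lt hb')
  have := P.sE_mono.reflect_lt (hb.trans_lt ha')
  omega

lemma eq_succ_of_sE_eq_succ {i b c : ℕ} (hb : b ≤ P.t) (hi : P.sE i ≤ c)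
    (hi' : c < P.sE (i + 1)) (hbc : P.sE b = c + 1) : b = i + 1 := by
  have := P.sE_mono.reflect_lt (show P.sE i < P.sE b by omega)
  have : ¬i + 1 < b := fun h => absurd (P.sE_lt_sE h hb) (by omega)
  omega

lemma exists_sE_le_lt_sE_succ {b c : ℕ} (hb : b ≤ P.t) (hc : c < P.sE b) :
    ∃ i : Fin P.t, (i : ℕ) < b ∧ P.sE i ≤ c ∧ c < P.sE (i + 1) := by
  induction b with
  | zero => simp [sE_zero] at hc
  | succ b ih =>
    rcases Nat.lt_or_ge c (P.sE b) with h | h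
    · obtain ⟨i, hib, hi⟩ := ih (by omega) h
      exact ⟨i, by omega, hi⟩
    · exact ⟨⟨b, by omega⟩, by simp, h, hc⟩

end StackPartition

noncomputable def stackPoly {n : ℕ} (P : StackPartition n) (lam : Params P) (i : Fin P.t) :
    ℂ[X] :=
  ∏ k, (X - C (lam i k))

section G

variable {n : ℕ} (P : StackPartition n) (lam : Params P) (j : Fin P.t)

lemma stackPoly_monic (i : Fin P.t) : (stackPoly P lam i).Monic :=
  monic_prod_of_monic _ _ fun _ _ => monic_X_sub_C _

lemma natDegree_stackPoly (i : Fin P.t) : (stackPoly P lam i).natDegree = P.l i := by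
  simp [stackPoly, natDegree_finsetProd_X_sub_C_eq_card]

lemma sum_ite_diagBlock_eq {i : Fin P.t} (hij : (i : ℕ) < j + 1) {r c : ℕ} (hc : P.sE i ≤ c)
    (hc' : c < P.sE (i + 1)) :
    (∑ b : Fin P.t,
      if (b : ℕ) ≤ j ∧ P.sE b ≤ r ∧ r < P.sE (b + 1) ∧ P.sE b ≤ c ∧ c < P.sE (b + 1)
      then genCompE (P.l b) (lam b) (r - P.sE b) (c - P.sE b) else 0)
      = if P.sE i ≤ r ∧ r < P.sE (i + 1) then
          genCompE (P.l i) (lam i) (r - P.sE i) (c - P.sE i) else 0 := by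
  rw [Finset.sum_eq_single i]
  · simp only [show (i : ℕ) ≤ j by omega, hc, hc', true_and, and_true]
  · exact fun b _ hb => if_neg fun ⟨_, _, _, hb1, hb2⟩ =>
      hb (Fin.ext (P.eq_of_sE_le_of_lt_sE_succ hb1 hb2 hc hc'))
  · simp

lemma sum_ite_junction_eq {i : Fin P.t} {r c : ℕ} (hr : r < P.sE (j + 1)) (hc : P.sE i ≤ c)
    (hc' : c < P.sE (i + 1)) :
    (∑ b : Fin P.t,
      if 1 ≤ (b : ℕ) ∧ (b : ℕ) ≤ j ∧ r = P.sE b ∧ c + 1 = P.sE b then (1 : ℂ)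
      else 0)
      = if r = c + 1 ∧ c + 1 = P.sE (i + 1) then 1 else 0 := by
  split_ifs with h
  · have hij : (i : ℕ) + 1 < j + 1 := P.sE_mono.reflect_lt (by omega)
    rw [Finset.sum_eq_single ⟨i + 1, by omega⟩]
    · exact if_pos ⟨by simp, by simp; omega, by simp; omega, by simp; omega⟩
    · exact fun b _ hb => if_neg fun ⟨_, _, _, hb1⟩ =>
        hb (Fin.ext (P.eq_succ_of_sE_eq_succ b.isLt.le hc hc' hb1.symm))
    · simp
  · refine Finset.sum_eq_zero fun b _ => if_neg fun ⟨_, _, hrb, hb1⟩ => h ?_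
    have := P.eq_succ_of_sE_eq_succ b.isLt.le hc hc' hb1.symm
    rw [← this]
    omega

lemma Gm_apply {i : Fin P.t} (hij : (i : ℕ) < j + 1) (r c : Fin (P.sE (j + 1)))
    (hc : P.sE i ≤ c) (hc' : (c : ℕ) < P.sE (i + 1)) :
    Gm P lam j r c =
      if (r : ℕ) = c + 1 then 1
      else if (c : ℕ) + 1 = P.sE (i + 1) ∧ P.sE i ≤ r ∧ (r : ℕ) < P.sE (i + 1) then
        -(stackPoly P lam i).coeff (r - P.sE i)
      else 0 := by
  have hl : P.sE (i + 1) = P.sE i + P.l i := P.sE_succ i.isLt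
  simp only [Gm, of_apply, GEntry]
  rw [sum_ite_diagBlock_eq P lam j hij hc hc', sum_ite_junction_eq P j r.isLt hc hc']
  simp only [genCompE, stackPoly]
  split_ifs <;> first | (exfalso; omega) | simp

lemma Gm_apply_eq_zero_of_succ_lt (r c : Fin (P.sE (j + 1))) (h : (c : ℕ) + 1 < r) :
    Gm P lam j r c = 0 := by
  obtain ⟨i, hij, hc, hc'⟩ := P.exists_sE_le_lt_sE_succ j.isLt c.isLt
  rw [Gm_apply P lam j hij r c hc hc', if_neg (by omega), if_neg (by omega)]

lemma Gm_apply_eq_one_of_eq_succ (r c : Fin (P.sE (j + 1))) (h : (r : ℕ) = c + 1) :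
    Gm P lam j r c = 1 := by
  obtain ⟨i, hij, hc, hc'⟩ := P.exists_sE_le_lt_sE_succ j.isLt c.isLt
  rw [Gm_apply P lam j hij r c hc hc', if_pos h]

lemma Gm_mulVec_unitVec_of_lt {i : Fin P.t} (hij : (i : ℕ) < j + 1) {c : ℕ} (hc : P.sE i ≤ c)
    (hc' : c + 1 < P.sE (i + 1)) :
    Gm P lam j *ᵥ unitVec (P.sE (j + 1)) c = unitVec (P.sE (j + 1)) (c + 1) := by
  have hcN : c < P.sE (j + 1) := by have := P.sE_mono (show (i : ℕ) + 1 ≤ j + 1 by omega); omega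
  ext r
  rw [mulVec_unitVec_apply _ hcN, Gm_apply P lam j hij r ⟨c, hcN⟩ hc (by simp; omega)]
  simp only [unitVec]
  split_ifs <;> first | rfl | (exfalso; omega)

lemma Gm_mulVec_unitVec_last {i : Fin P.t} (hij : (i : ℕ) < j + 1) :
    Gm P lam j *ᵥ unitVec (P.sE (j + 1)) (P.sE i + (P.l i - 1))
      = unitVec (P.sE (j + 1)) (P.sE (i + 1))
        - ∑ k ∈ Finset.range (P.l i),
            (stackPoly P lam i).coeff k • unitVec (P.sE (j + 1)) (P.sE i + k) := by
  have hl : P.sE (i + 1) = P.sE i + P.l i := P.sE_succ i.isLt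
  have hl0 := P.l_pos i
  have hcN : P.sE i + (P.l i - 1) < P.sE (j + 1) := by
    have := P.sE_mono (show (i : ℕ) + 1 ≤ j + 1 by omega); omega
  ext r
  rw [mulVec_unitVec_apply _ hcN, Gm_apply P lam j hij r _ (by simp) (by simp; omega)]
  simp only [Pi.sub_apply, Finset.sum_apply, Pi.smul_apply, smul_eq_mul, unitVec, mul_ite, mul_one,
    mul_zero]
  by_cases hr : P.sE i ≤ r ∧ (r : ℕ) < P.sE (i + 1)
  · rw [Finset.sum_eq_single ((r : ℕ) - P.sE i) (fun k _ hk => if_neg (by omega))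
      (fun h => absurd (Finset.mem_range.mpr (by omega)) h)]
    split_ifs <;> first | (exfalso; omega) | simp
  · rw [Finset.sum_eq_zero fun k hk => if_neg (by simp at hk; omega)]
    split_ifs <;> first | (exfalso; omega) | simp

lemma aeval_stackPoly_mulVec_unitVec {i : Fin P.t} (hij : (i : ℕ) < j + 1) :
    aeval (Gm P lam j) (stackPoly P lam i) *ᵥ unitVec (P.sE (j + 1)) (P.sE i)
      = unitVec (P.sE (j + 1)) (P.sE (i + 1)) := by
  have hl : P.sE (i + 1) = P.sE i + P.l i := P.sE_succ i.isLt
  have hdeg := natDegree_stackPoly P lam i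
  refine aeval_mulVec_eq_of_companion_chain (u := fun k => unitVec _ (P.sE i + k))
    (stackPoly_monic P lam i) (hdeg ▸ P.l_pos i) (fun k hk => ?_) ?_
  · exact Gm_mulVec_unitVec_of_lt P lam j hij (by omega) (by omega)
  · rw [hdeg]
    exact Gm_mulVec_unitVec_last P lam j hij

lemma aeval_prod_stackPoly_mulVec_unitVec_zero {a : ℕ} (ha : a ≤ j + 1) :
    aeval (Gm P lam j) (∏ i : Fin P.t, if (i : ℕ) < a then stackPoly P lam i else 1)
      *ᵥ unitVec (P.sE (j + 1)) 0 = unitVec (P.sE (j + 1)) (P.sE a) := by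
  induction a with
  | zero => simp [P.sE_zero]
  | succ a ih =>
    have hat : a < P.t := by have := j.isLt; omega
    rw [Fin.prod_ite_lt_succ hat, mul_comm, _root_.map_mul, ← mulVec_mulVec, ih (by omega),
      aeval_stackPoly_mulVec_unitVec P lam j (i := ⟨a, hat⟩) (by simp; omega)]

lemma prod_lamUpTo :
    ((lamUpTo P lam j).map fun a => X - C a).prod
      = ∏ i : Fin P.t, if (i : ℕ) < j + 1 then stackPoly P lam i else 1 := by
  rw [lamUpTo, ← Multiset.coe_mapAddMonoidHom, map_sum, Multiset.prod_sum]
  refine Finset.prod_congr rfl fun i _ => ?_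
  split_ifs <;> first
    | (exfalso; omega)
    | simp [stackMultiset, stackPoly, Finset.prod_eq_multiset_prod, Function.comp_def]

lemma card_lamUpTo : Multiset.card (lamUpTo P lam j) = P.sE (j + 1) := by
  rw [lamUpTo, Multiset.card_sum, StackPartition.sE]
  refine Finset.sum_congr rfl fun i _ => ?_
  split_ifs <;> first | (exfalso; omega) | simp [stackMultiset]

lemma matrixSimilar_Gm_companion :
    MatrixSimilar (Gm P lam j)
      (companion ((lamUpTo P lam j).map fun a => X - C a).prod (P.sE (j + 1))) := by
  refine matrixSimilar_companion (v := unitVec _ 0) (monic_multisetProd_X_sub_C _)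
    (by rw [natDegree_multiset_prod_X_sub_C_eq_card, card_lamUpTo]) ?_ ?_
  · rw [prod_lamUpTo, aeval_prod_stackPoly_mulVec_unitVec_zero P lam j le_rfl]
    exact unitVec_of_le le_rfl
  · rw [det_krylov_unitVec_zero_of_hessenberg (Gm_apply_eq_zero_of_succ_lt P lam j)
      (Gm_apply_eq_one_of_eq_succ P lam j)]
    exact isUnit_one

end G

theorem statement6_general (n : ℕ) (P : StackPartition n) (lam : Params P)
    (j : Fin P.t) :
    ∃ e : JordanIdx (lamUpTo P lam (j : ℕ)) ≃ Fin (P.sE ((j : ℕ) + 1)),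
      MatrixSimilar (Gm P lam j)
        ((jordanOfMultiset (lamUpTo P lam (j : ℕ))).submatrix e.symm e.symm) := by
  let e := Fintype.equivFinOfCardEq ((card_jordanIdx _).trans (card_lamUpTo P lam j))
  exact ⟨e, (matrixSimilar_Gm_companion P lam j).trans
    (matrixSimilar_jordanOfMultiset_companion _ e).symm⟩

/-- For a canonical plane matrix `A ∈ 𝒫_π` with parameters
`λ_{j,i}`, each `G_j` is similar to `⊕_z J_{α(z,j)}(z)`, the direct sum over
the distinct `z` with `α(z,j) > 0` of one Jordan block of size `α(z,j)` per
eigenvalue (here `α(z,j)` is the multiplicity of `z` among all parameters of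
stacks `1,...,j`, encoded by the multiset `lamUpTo P lam j`). -/
theorem statement6 (n : ℕ) (hn : 2 ≤ n) (P : StackPartition n) (lam : Params P)
    (j : Fin P.t) :
    ∃ e : JordanIdx (lamUpTo P lam (j : ℕ)) ≃ Fin (P.sE ((j : ℕ) + 1)),
      MatrixSimilar (Gm P lam j)
        ((jordanOfMultiset (lamUpTo P lam (j : ℕ))).submatrix e.symm e.symm) :=
  statement6_general n P lam j
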